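/- Let Q be the cyclic quiver of length ℓ ≥ 1 with Cartan matrix C_Q, and let v, d ∈ ℕ^{Q₀} with d ≠ 0. Then the following are equivalent: (i) for every u ∈ ℕ^{Q₀} with u_i ≤ v_i for all i, one has u·(d − C_Q v) + (1/2) u·C_Q u ≥ min_{i ∈ Q₀} u_i; (ii) for every nonempty connected subset I ⊆ Q₀, one has e_I·(d − C_Q v) ≥ −1. -/

import Mathlib

open Matrix

noncomputable section

/-- The underlying graph of the cyclic quiver of length `ℓ`. -/
def cyclicGraph (ℓ : ℕ) : SimpleGraph (ZMod ℓ) where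
  Adj i j := i ≠ j ∧ (j = i + 1 ∨ i = j + 1)
  symm := ⟨by
    intro i j h
    exact ⟨h.1.symm, h.2.symm⟩⟩
  loopless := ⟨fun i h => h.1 rfl⟩

/-- A nonempty subset `I` of the vertices of the cyclic quiver is connected if the full
subgraph induced on `I` is connected. -/
def CyclicConnected (ℓ : ℕ) (I : Finset (ZMod ℓ)) : Prop :=
  ((cyclicGraph ℓ).induce (I : Set (ZMod ℓ))).Connected

/-- The Cartan matrix `C_Q = 2·Id - A - Aᵀ` of the cyclic quiver of length `ℓ`. -/
def cyclicCartan (ℓ : ℕ) : Matrix (ZMod ℓ) (ZMod ℓ) ℤ := fun i j =>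
  2 * (if i = j then 1 else 0) - (if j = i + 1 then 1 else 0) - (if i = j + 1 then 1 else 0)

/-- The indicator vector `e_I = ∑_{i ∈ I} e_i` of a subset of vertices. -/
def eInd (ℓ : ℕ) (I : Finset (ZMod ℓ)) : ZMod ℓ → ℤ := fun i => if i ∈ I then 1 else 0

/-!
Write `w = d - C_Q v` and `F(x) = 2 x·w + x·C_Q x`, twice the left-hand side of (i). For an
indicator vector, `e_I·C_Q e_I` counts the arrows between `I` and its complement, twice the number
of `i ∈ I` with `i + 1 ∉ I`; this is at most `2` when `I` is connected and at least `2` when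
`I` is nonempty and proper.

(i) ⇒ (ii): apply (i) to `e_K` with `K = {i ∈ I | v_i ≠ 0}`. Putting back the vertices of `I`
where `v` vanishes does not decrease `F`, because the off-diagonal entries of `C_Q` are
nonpositive; hence `0 ≤ F(e_I) ≤ 2 e_I·w + 2`.

(ii) ⇒ (i): `F` is additive on sets without arrows between them, so splitting a disconnected set
gives `F(e_L) ≥ 0` for every proper `L`, while `F(e_{Q₀}) = 2 ∑ d ≥ 2`. Peeling `u` into the
layers `{u > k}` only drops nonnegative cross terms, and exactly `min u` of these layers are `Q₀`.
-/

theorem Fintype.sum_comp_add_right {G M : Type*} [AddGroup G] [Fintype G] [AddCommMonoid M]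
    (f : G → M) (c : G) : ∑ i, f (i + c) = ∑ i, f i :=
  Fintype.sum_equiv (Equiv.addRight c) _ _ fun _ => rfl

theorem Fintype.sum_comp_sub_right {G M : Type*} [AddGroup G] [Fintype G] [AddCommMonoid M]
    (f : G → M) (c : G) : ∑ i, f (i - c) = ∑ i, f i :=
  Fintype.sum_equiv (Equiv.subRight c) _ _ fun _ => rfl

theorem ZMod.val_add_one_of_ne_neg_one {n : ℕ} [NeZero n] {z : ZMod n} (hz : z ≠ -1) :
    (z + 1).val = z.val + 1 := by
  obtain ⟨m, rfl⟩ := Nat.exists_eq_succ_of_ne_zero (NeZero.ne n)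
  have hlt : z.val < m := lt_of_le_of_ne (Nat.lt_succ_iff.mp (ZMod.val_lt z))
    fun h => hz (ZMod.val_injective _ (h.trans (ZMod.val_neg_one m).symm))
  rw [ZMod.val_add, ZMod.val_one_eq_one_mod, Nat.one_mod_eq_one.mpr (by omega),
    Nat.mod_eq_of_lt (by omega)]

theorem SimpleGraph.exists_separated_of_not_connected_induce {V : Type*} [DecidableEq V]
    {G : SimpleGraph V} {L : Finset V} (hne : L.Nonempty)
    (hL : ¬(G.induce (L : Set V)).Connected) :
    ∃ C ⊆ L, C.Nonempty ∧ (L \ C).Nonempty ∧ ∀ x ∈ C, ∀ y ∈ L \ C, ¬G.Adj x y := by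
  classical
  obtain ⟨a, ha⟩ := hne
  obtain ⟨b, hab⟩ : ∃ b, ¬(G.induce (L : Set V)).Reachable ⟨a, ha⟩ b := by
    by_contra! h
    exact hL ((connected_iff_exists_forall_reachable _).mpr ⟨_, h⟩)
  let C := L.filter fun y => ∃ hy : y ∈ L, (G.induce (L : Set V)).Reachable ⟨a, ha⟩ ⟨y, hy⟩
  refine ⟨C, Finset.filter_subset _ _, ⟨a, by simp [C, ha]⟩, ⟨b, by simpa [C] using hab⟩, ?_⟩
  rintro x hx y hy hxy
  simp only [C, Finset.mem_sdiff, Finset.mem_filter] at hx hy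
  obtain ⟨-, _, hax⟩ := hx
  exact hy.2 ⟨hy.1, hy.1, hax.trans (Adj.reachable (show _ from hxy))⟩

namespace CyclicQuiver

open Finset

variable {ℓ : ℕ}

theorem cyclicCartan_isSymm : (cyclicCartan ℓ).IsSymm := by
  ext i j
  simp only [transpose_apply, cyclicCartan, eq_comm (a := i)]
  ring

theorem eInd_eq_add_eInd_sdiff {C L : Finset (ZMod ℓ)} (hCL : C ⊆ L) :
    eInd ℓ L = eInd ℓ C + eInd ℓ (L \ C) := funext fun i => by
  by_cases hC : i ∈ C
  · simp [eInd, hC, hCL hC]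
  · by_cases hL : i ∈ L <;> simp [eInd, hC, hL]

def rightEnds (I : Finset (ZMod ℓ)) : Finset (ZMod ℓ) := I.filter (· + 1 ∉ I)

variable [NeZero ℓ]

theorem cyclicCartan_mulVec (x : ZMod ℓ → ℤ) (i : ZMod ℓ) :
    (cyclicCartan ℓ *ᵥ x) i = 2 * x i - x (i + 1) - x (i - 1) := by
  simp [mulVec, dotProduct, cyclicCartan, sub_mul, sum_sub_distrib, ite_mul,
    eq_sub_iff_add_eq, ← sub_eq_iff_eq_add, eq_comm (b := i)]

theorem dotProduct_cyclicCartan_mulVec_comm (x y : ZMod ℓ → ℤ) :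
    x ⬝ᵥ cyclicCartan ℓ *ᵥ y = y ⬝ᵥ cyclicCartan ℓ *ᵥ x := by
  rw [dotProduct_mulVec, dotProduct_comm, ← mulVec_transpose, cyclicCartan_isSymm.eq]

theorem sum_cyclicCartan_mulVec (x : ZMod ℓ → ℤ) : ∑ i, (cyclicCartan ℓ *ᵥ x) i = 0 := by
  simp only [cyclicCartan_mulVec, sum_sub_distrib, ← mul_sum,
    Fintype.sum_comp_add_right x, Fintype.sum_comp_sub_right x]
  ring

theorem dotProduct_cyclicCartan_mulVec_self (x : ZMod ℓ → ℤ) :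
    x ⬝ᵥ cyclicCartan ℓ *ᵥ x = 2 * ∑ i, x i * (x i - x (i + 1)) := by
  have hshift : ∑ i, x i * x (i - 1) = ∑ i, x i * x (i + 1) := by
    rw [← Fintype.sum_comp_add_right (fun i => x i * x (i - 1)) 1]
    simp [mul_comm]
  simp only [dotProduct, cyclicCartan_mulVec, mul_sub, sum_sub_distrib, hshift,
    mul_left_comm _ (2 : ℤ), ← mul_sum]
  ring

theorem dotProduct_cyclicCartan_mulVec_self_nonneg (x : ZMod ℓ → ℤ) :
    0 ≤ x ⬝ᵥ cyclicCartan ℓ *ᵥ x := by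
  have hsq : 2 * ∑ i, x i * (x i - x (i + 1)) = ∑ i, (x i - x (i + 1)) ^ 2 := by
    have := Fintype.sum_comp_add_right (x · ^ 2) 1
    simp only [sub_sq, mul_sub, sum_add_distrib, sum_sub_distrib, this, mul_assoc, ← mul_sum,
      ← sq]
    ring
  rw [dotProduct_cyclicCartan_mulVec_self, hsq]
  positivity

/-- The off-diagonal entries of `C_Q` are nonpositive. -/
theorem dotProduct_cyclicCartan_mulVec_nonpos {z y : ZMod ℓ → ℤ} (hz : 0 ≤ z) (hy : 0 ≤ y)
    (hzy : ∀ i, z i ≠ 0 → y i = 0) : z ⬝ᵥ cyclicCartan ℓ *ᵥ y ≤ 0 := by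
  refine sum_nonpos fun i _ => ?_
  rw [cyclicCartan_mulVec]
  by_cases hi : z i = 0
  · simp [hi]
  · rw [hzy i hi]
    have : 0 ≤ z i := hz i
    have : 0 ≤ y (i + 1) := hy (i + 1)
    have : 0 ≤ y (i - 1) := hy (i - 1)
    nlinarith

theorem eInd_dotProduct_cyclicCartan_mulVec_eInd (I : Finset (ZMod ℓ)) :
    eInd ℓ I ⬝ᵥ cyclicCartan ℓ *ᵥ eInd ℓ I = 2 * #(rightEnds I) := by
  have hterm : ∀ i, eInd ℓ I i * (eInd ℓ I i - eInd ℓ I (i + 1)) =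
      if i ∈ rightEnds I then 1 else 0 := fun i => by
    by_cases hi : i ∈ I <;> by_cases h : i + 1 ∈ I <;> simp [eInd, rightEnds, hi, h]
  simp [dotProduct_cyclicCartan_mulVec_self, hterm]

theorem rightEnds_nonempty {I : Finset (ZMod ℓ)} (hne : I.Nonempty) (huniv : I ≠ univ) :
    (rightEnds I).Nonempty := by
  obtain ⟨a, ha⟩ := hne
  by_contra hempty
  have hclosed : ∀ i ∈ I, i + 1 ∈ I := by
    simpa [rightEnds, filter_eq_empty_iff] using hempty
  have hreach : ∀ k : ℕ, a + k ∈ I := fun k => by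
    induction k with
    | zero => simpa using ha
    | succ k ih => simpa [add_assoc] using hclosed _ ih
  exact huniv (eq_univ_of_forall fun x => by simpa using hreach (x - a).val)

/-- The potential `x ↦ (x - (s + 1)).val` goes up by one along every arrow `x → x + 1` except
`s → s + 1`, so its sublevel set through `r` can only be left through the arrow `r → r + 1`. -/
theorem card_rightEnds_le_one {I : Finset (ZMod ℓ)} (hI : CyclicConnected ℓ I) :
    #(rightEnds I) ≤ 1 := by
  refine card_le_one.mpr fun r hr s hs => ?_
  by_contra hrs
  simp only [rightEnds, mem_filter] at hr hs
  set f : ZMod ℓ → ℕ := fun x => (x - (s + 1)).val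
  have hf_inj : Function.Injective f := fun x y h => by
    simpa using ZMod.val_injective ℓ h
  have hf_succ : ∀ x, x ≠ s → f (x + 1) = f x + 1 := fun x hx => by
    simp only [f, show x + 1 - (s + 1) = x - (s + 1) + 1 by ring]
    exact ZMod.val_add_one_of_ne_neg_one fun h => hx (by linear_combination h)
  have hf_lt : f r < f s := by
    have hmax : f s + 1 = ℓ := by
      obtain ⟨m, rfl⟩ := Nat.exists_eq_succ_of_ne_zero (NeZero.ne ℓ)
      simp [f, ZMod.val_neg_one]
    have : f r < ℓ := ZMod.val_lt _
    exact lt_of_le_of_ne (by omega) (hf_inj.ne hrs)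
  obtain ⟨p⟩ := hI.preconnected ⟨r, hr.1⟩ ⟨s, hs.1⟩
  obtain ⟨⟨⟨⟨x, hx⟩, ⟨y, hy⟩⟩, hadj⟩, -, hx_le, hy_gt⟩ :=
    p.exists_boundary_dart {x | f x ≤ f r} (show f r ≤ f r from le_rfl) (by simpa using hf_lt)
  simp only [Set.mem_ofPred_eq, not_le] at hx_le hy_gt
  rcases (show x ≠ y ∧ (y = x + 1 ∨ x = y + 1) from hadj).2 with rfl | rfl
  · have hxs : x ≠ s := by rintro rfl; omega
    have hxr : x = r := hf_inj (by rw [hf_succ x hxs] at hy_gt; omega)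
    exact hr.2 (hxr ▸ hy)
  · have hys : y = s := by
      by_contra hys
      rw [hf_succ y hys] at hx_le
      omega
    exact hs.2 (hys ▸ hx)

theorem eInd_dotProduct_cyclicCartan_mulVec_eInd_eq_zero {C D : Finset (ZMod ℓ)}
    (hdisj : Disjoint C D) (hsep : ∀ x ∈ C, ∀ y ∈ D, ¬(cyclicGraph ℓ).Adj x y) :
    eInd ℓ C ⬝ᵥ cyclicCartan ℓ *ᵥ eInd ℓ D = 0 := by
  refine sum_eq_zero fun i _ => ?_
  by_cases hi : i ∈ C
  · have h0 : i ∉ D := disjoint_left.mp hdisj hi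
    have h1 : i + 1 ∉ D := fun h => hsep i hi _ h ⟨fun h' => h0 (h' ▸ h), Or.inl rfl⟩
    have h2 : i - 1 ∉ D := fun h => hsep i hi _ h ⟨fun h' => h0 (h' ▸ h), Or.inr (by ring)⟩
    simp [cyclicCartan_mulVec, eInd, h0, h1, h2]
  · simp [eInd, hi]

theorem eInd_dotProduct_cyclicCartan_mulVec_nonneg {L : Finset (ZMod ℓ)} {y : ZMod ℓ → ℤ}
    (hy : 0 ≤ y) (hyL : ∀ i ∉ L, y i = 0) : 0 ≤ eInd ℓ L ⬝ᵥ cyclicCartan ℓ *ᵥ y := by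
  have hsum : eInd ℓ L ⬝ᵥ cyclicCartan ℓ *ᵥ y + eInd ℓ Lᶜ ⬝ᵥ cyclicCartan ℓ *ᵥ y = 0 := by
    rw [← add_dotProduct, ← sum_cyclicCartan_mulVec y, ← one_dotProduct]
    congr 1
    funext i
    by_cases hi : i ∈ L <;> simp [eInd, hi]
  have hcompl : eInd ℓ Lᶜ ⬝ᵥ cyclicCartan ℓ *ᵥ y ≤ 0 :=
    dotProduct_cyclicCartan_mulVec_nonpos (fun i => by unfold eInd; split_ifs <;> simp) hy
      fun i hi => hyL i (by simpa [eInd] using hi)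
  linarith

/-- Twice the left-hand side of the flatness inequality, with `w = d - C_Q v`. -/
def flatnessForm (w x : ZMod ℓ → ℤ) : ℤ := 2 * (x ⬝ᵥ w) + x ⬝ᵥ cyclicCartan ℓ *ᵥ x

theorem flatnessForm_add (w x y : ZMod ℓ → ℤ) :
    flatnessForm w (x + y) =
      flatnessForm w x + flatnessForm w y + 2 * (x ⬝ᵥ cyclicCartan ℓ *ᵥ y) := by
  simp only [flatnessForm, add_dotProduct, mulVec_add, dotProduct_add,
    dotProduct_cyclicCartan_mulVec_comm y x]
  ring

theorem flatnessForm_eInd (w : ZMod ℓ → ℤ) (I : Finset (ZMod ℓ)) :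
    flatnessForm w (eInd ℓ I) = 2 * (eInd ℓ I ⬝ᵥ w) + 2 * #(rightEnds I) := by
  rw [flatnessForm, eInd_dotProduct_cyclicCartan_mulVec_eInd]

theorem flatnessForm_eInd_univ (w : ZMod ℓ → ℤ) :
    flatnessForm w (eInd ℓ univ) = 2 * ∑ i, w i := by
  simp [flatnessForm_eInd, rightEnds, eInd, dotProduct]

theorem flatnessForm_eInd_nonneg {w : ZMod ℓ → ℤ}
    (hw : ∀ I : Finset (ZMod ℓ), I.Nonempty → CyclicConnected ℓ I → -1 ≤ eInd ℓ I ⬝ᵥ w)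
    {L : Finset (ZMod ℓ)} (hL : L ≠ univ) : 0 ≤ flatnessForm w (eInd ℓ L) := by
  induction L using strongInduction with
  | H L ih =>
    obtain rfl | hne := L.eq_empty_or_nonempty
    · simp [flatnessForm_eInd, rightEnds, eInd, dotProduct]
    by_cases hconn : CyclicConnected ℓ L
    · have hends := (rightEnds_nonempty hne hL).card_pos
      have := hw L hne hconn
      rw [flatnessForm_eInd]
      omega
    obtain ⟨C, hCL, hCne, hDne, hsep⟩ :=
      SimpleGraph.exists_separated_of_not_connected_induce hne hconn
    have hC : C ⊂ L := Finset.ssubset_iff_subset_ne.mpr ⟨hCL, fun h => by simp [h] at hDne⟩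
    rw [eInd_eq_add_eInd_sdiff hCL, flatnessForm_add,
      eInd_dotProduct_cyclicCartan_mulVec_eInd_eq_zero disjoint_sdiff hsep]
    have h1 := ih C hC fun h => hL (univ_subset_iff.mp (h ▸ hCL))
    have h2 := ih (L \ C) (sdiff_ssubset hCL hCne)
      fun h => hL (univ_subset_iff.mp (h ▸ sdiff_subset))
    omega

theorem two_mul_le_flatnessForm {w : ZMod ℓ → ℤ} (hw_univ : 1 ≤ ∑ i, w i)
    (hw : ∀ I : Finset (ZMod ℓ), I.Nonempty → CyclicConnected ℓ I → -1 ≤ eInd ℓ I ⬝ᵥ w)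
    (u : ZMod ℓ → ℕ) {m : ℕ} (hm : ∀ i, m ≤ u i) :
    2 * (m : ℤ) ≤ flatnessForm w fun i => (u i : ℤ) := by
  obtain ⟨M, hM⟩ : ∃ M, ∀ i, u i ≤ M := ⟨univ.sup u, fun i => le_sup (mem_univ i)⟩
  induction M generalizing u m with
  | zero =>
    have hu : (fun i => (u i : ℤ)) = 0 := funext fun i => by simp [Nat.le_zero.mp (hM i)]
    have hm0 : m = 0 := Nat.le_zero.mp ((hm 0).trans (hM 0))
    simp [hu, hm0, flatnessForm]
  | succ M ih =>
    set L := univ.filter (0 < u ·)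
    have hsplit : (fun i => (u i : ℤ)) = eInd ℓ L + fun i => ((u i - 1 : ℕ) : ℤ) :=
      funext fun i => by by_cases h : 0 < u i <;> simp [eInd, L, h]; omega
    have hrest := ih (fun i => u i - 1) (m := m - 1) (fun i => by have := hm i; omega)
      fun i => by have := hM i; omega
    have hcross := eInd_dotProduct_cyclicCartan_mulVec_nonneg (L := L)
      (y := fun i => ((u i - 1 : ℕ) : ℤ)) (fun i => by positivity) fun i hi => by simp_all [L]
    have hlayer : 2 * (m : ℤ) ≤ 2 * ((m - 1 : ℕ) : ℤ) + flatnessForm w (eInd ℓ L) := by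
      by_cases hL : L = univ
      · rw [hL, flatnessForm_eInd_univ]
        omega
      · obtain ⟨i, hi⟩ : ∃ i, i ∉ L := by simpa [eq_univ_iff_forall] using hL
        obtain rfl : m = 0 := by have := hm i; simp [L] at hi; omega
        simpa using flatnessForm_eInd_nonneg hw hL
    rw [hsplit, flatnessForm_add]
    omega

theorem flatnessForm_le_flatnessForm_add {d v x z : ZMod ℓ → ℤ} (hd : 0 ≤ d) (hz : 0 ≤ z)
    (hxv : x ≤ v) (hzv : ∀ i, z i ≠ 0 → x i = v i) :
    flatnessForm (d - cyclicCartan ℓ *ᵥ v) x ≤ flatnessForm (d - cyclicCartan ℓ *ᵥ v) (x + z) := by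
  have hzd : 0 ≤ z ⬝ᵥ d := dotProduct_nonneg_of_nonneg hz hd
  have hzz := dotProduct_cyclicCartan_mulVec_self_nonneg z
  have hzvx : z ⬝ᵥ cyclicCartan ℓ *ᵥ (v - x) ≤ 0 :=
    dotProduct_cyclicCartan_mulVec_nonpos hz (sub_nonneg.mpr hxv) fun i hi => by
      simp [hzv i hi]
  rw [mulVec_sub, dotProduct_sub, dotProduct_cyclicCartan_mulVec_comm z x] at hzvx
  rw [flatnessForm_add]
  simp only [flatnessForm, dotProduct_sub] at hzvx ⊢
  linarith

theorem flatnessForm_eInd_filter_ne_zero_le {d v : ZMod ℓ → ℤ} (hd : 0 ≤ d) (hv : 0 ≤ v)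
    (I : Finset (ZMod ℓ)) :
    flatnessForm (d - cyclicCartan ℓ *ᵥ v) (eInd ℓ (I.filter (v · ≠ 0))) ≤
      flatnessForm (d - cyclicCartan ℓ *ᵥ v) (eInd ℓ I) := by
  have hsplit : eInd ℓ I = eInd ℓ (I.filter (v · ≠ 0)) + eInd ℓ (I.filter (v · = 0)) :=
    funext fun i => by by_cases hi : i ∈ I <;> by_cases h : v i = 0 <;> simp [eInd, hi, h]
  rw [hsplit]
  refine flatnessForm_le_flatnessForm_add hd (fun i => by unfold eInd; split_ifs <;> simp)
    (fun i => ?_) fun i hi => ?_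
  · have := hv i
    unfold eInd
    split_ifs <;> simp_all; omega
  · simp_all [eInd]

theorem neg_one_le_eInd_dotProduct {d v : ZMod ℓ → ℕ}
    (h : ∀ u : ZMod ℓ → ℕ, (∀ i, u i ≤ v i) →
      0 ≤ flatnessForm ((fun i => (d i : ℤ)) - cyclicCartan ℓ *ᵥ fun i => (v i : ℤ))
        fun i => (u i : ℤ))
    {I : Finset (ZMod ℓ)} (hI : CyclicConnected ℓ I) :
    -1 ≤ eInd ℓ I ⬝ᵥ ((fun i => (d i : ℤ)) - cyclicCartan ℓ *ᵥ fun i => (v i : ℤ)) := by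
  set K := I.filter fun i => (v i : ℤ) ≠ 0
  have hK := h (fun i => if i ∈ K then 1 else 0) fun i => by
    split_ifs <;> simp_all [K]; omega
  have hcast : (fun i => (((if i ∈ K then 1 else 0 : ℕ)) : ℤ)) = eInd ℓ K :=
    funext fun i => by simp [eInd]
  rw [hcast] at hK
  have hmono : flatnessForm ((fun i => (d i : ℤ)) - cyclicCartan ℓ *ᵥ fun i => (v i : ℤ))
      (eInd ℓ K) ≤ 2 * (eInd ℓ I ⬝ᵥ ((fun i => (d i : ℤ)) - cyclicCartan ℓ *ᵥ fun i => (v i : ℤ)))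
        + 2 * #(rightEnds I) :=
    flatnessForm_eInd _ I ▸
      flatnessForm_eInd_filter_ne_zero_le (fun i => by positivity) (fun i => by positivity) I
  have := card_rightEnds_le_one hI
  omega

theorem one_le_sum_sub_cyclicCartan_mulVec {d : ZMod ℓ → ℕ} (hd : d ≠ 0) (v : ZMod ℓ → ℤ) :
    1 ≤ ∑ i, ((fun i => (d i : ℤ)) - cyclicCartan ℓ *ᵥ v) i := by
  have : ∑ i, d i ≠ 0 := fun h => hd (funext fun i => by simpa using (sum_eq_zero_iff.mp h) i)
  simp only [Pi.sub_apply, sum_sub_distrib, sum_cyclicCartan_mulVec, sub_zero]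
  exact_mod_cast Nat.one_le_iff_ne_zero.mpr this

theorem cast_flatnessForm_div_two (u v d : ZMod ℓ → ℕ) :
    ((flatnessForm ((fun i => (d i : ℤ)) - cyclicCartan ℓ *ᵥ fun i => (v i : ℤ))
        fun i => (u i : ℤ) : ℤ) : ℚ) / 2 =
      (∑ i, (u i : ℚ) * ((d i : ℚ) - ∑ j, ((cyclicCartan ℓ i j : ℚ) * (v j : ℚ))))
        + (1 / 2 : ℚ) * ∑ i, ∑ j, (u i : ℚ) * (cyclicCartan ℓ i j : ℚ) * (u j : ℚ) := by
  have : ((flatnessForm ((fun i => (d i : ℤ)) - cyclicCartan ℓ *ᵥ fun i => (v i : ℤ))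
      fun i => (u i : ℤ) : ℤ) : ℚ) =
        2 * ∑ i, (u i : ℚ) * ((d i : ℚ) - ∑ j, ((cyclicCartan ℓ i j : ℚ) * (v j : ℚ)))
          + ∑ i, ∑ j, (u i : ℚ) * (cyclicCartan ℓ i j : ℚ) * (u j : ℚ) := by
    simp [flatnessForm, dotProduct, mulVec, mul_sum, mul_assoc]
  rw [this]
  ring

end CyclicQuiver

open CyclicQuiver Finset in
/-- The numerical core of the characterization of flatness of the moment map for framed
affine type A quivers: for the cyclic quiver of length `ℓ ≥ 1` and `v, d ∈ ℕ^{Q₀}` with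
`d ≠ 0`, the inequality `u·(d - C_Q v) + (1/2) u·C_Q u ≥ min_i u_i` holds for all
`0 ≤ u ≤ v` if and only if `e_I·(d - C_Q v) ≥ -1` for every nonempty connected `I ⊆ Q₀`. -/
theorem cyclic_flatness_inequality_iff
    (ℓ : ℕ) [NeZero ℓ] (v d : ZMod ℓ → ℕ) (hd : d ≠ 0) :
    (∀ u : ZMod ℓ → ℕ, (∀ i, u i ≤ v i) →
      ((∑ i, (u i : ℚ) * ((d i : ℚ) - ∑ j, ((cyclicCartan ℓ i j : ℚ) * (v j : ℚ))))
          + (1 / 2 : ℚ) * ∑ i, ∑ j, (u i : ℚ) * (cyclicCartan ℓ i j : ℚ) * (u j : ℚ)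
        ≥ Finset.univ.inf' Finset.univ_nonempty fun i => (u i : ℚ)))
    ↔ (∀ I : Finset (ZMod ℓ), I.Nonempty → CyclicConnected ℓ I →
        -1 ≤ ∑ i, eInd ℓ I i * ((d i : ℤ) - ∑ j, cyclicCartan ℓ i j * (v j : ℤ))) := by
  set w := (fun i => (d i : ℤ)) - cyclicCartan ℓ *ᵥ fun i => (v i : ℤ)
  simp only [← cast_flatnessForm_div_two, ge_iff_le]
  change _ ↔ ∀ I : Finset (ZMod ℓ), I.Nonempty → CyclicConnected ℓ I → -1 ≤ eInd ℓ I ⬝ᵥ w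
  constructor
  · intro h I _ hI
    refine neg_one_le_eInd_dotProduct (fun u hu => ?_) hI
    have hmin : (0 : ℚ) ≤ univ.inf' univ_nonempty fun i => (u i : ℚ) :=
      le_inf' _ _ fun i _ => by positivity
    have : (0 : ℚ) ≤ flatnessForm w fun i => (u i : ℤ) := by linarith [h u hu]
    exact_mod_cast this
  · intro h u _
    obtain ⟨i₀, -, hi₀⟩ := exists_mem_eq_inf' univ_nonempty fun i => (u i : ℚ)
    have := two_mul_le_flatnessForm (one_le_sum_sub_cyclicCartan_mulVec hd _) h u (m := u i₀)
      fun i => by exact_mod_cast hi₀ ▸ inf'_le _ (mem_univ i)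
    rw [hi₀]
    have : 2 * (u i₀ : ℚ) ≤ flatnessForm w fun i => (u i : ℤ) := by exact_mod_cast this
    linarith

end
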